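/- Fix μ a positive integer and let a function g(y) = c[(y^μ + y^{−μ}) + μ λ^{−k}(λ^k − y)(y^μ − y^{−μ}) − 2cos(2πkμ/n)] where λ = exp(2πi/n), λ^k ≠ 1 or c arbitrary. Then G(y) = λ^k y g(y)/(y − λ^k)² is a Laurent polynomial in y, i.e. (y − λ^k)² divides y·g(y) in ℂ[y, y^{−1}]; moreover G has highest degree ≤ μ and lowest degree ≥ 1 − μ. -/

import Mathlib

/-!
Put `a = λ^k` and `t = 2 cos (2πkμ/n)`. Since `a^μ = exp (2πikμ/n)`, we have
`a^{2μ} + 1 = t a^μ`, so the polynomial `P(y) = y^μ g(y) / c` of degree `≤ 2μ + 1` vanishes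
at `a`. The correction term `μ a⁻¹ (a - y)(y^μ - y^{-μ})` is exactly what makes `P'(a) = 0`
too, because `a · d/dy (y^{2μ} + 1 - t y^μ)|_{y=a} = μ (a^{2μ} - 1)`. Hence `P = (y - a)² Q`
with `deg Q ≤ 2μ - 1`, and `G(y) = a c Q(y) y^{1-μ}`.
-/

open Complex Polynomial

namespace Polynomial

theorem sq_X_sub_C_dvd_of_isRoot_derivative {R : Type*} [CommRing R] {p : R[X]} {a : R}
    (hp : p.IsRoot a) (hp' : (derivative p).IsRoot a) : (X - C a) ^ 2 ∣ p := by
  rcases eq_or_ne p 0 with rfl | h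
  · exact dvd_zero _
  · exact (le_rootMultiplicity_iff h).1 ((one_lt_rootMultiplicity_iff_isRoot h).2 ⟨hp, hp'⟩)

theorem mul_eval_derivative_X_pow {R : Type*} [CommRing R] (a : R) (n : ℕ) :
    a * (derivative (X ^ n : R[X])).eval a = n * a ^ n := by
  cases n with
  | zero => simp
  | succ n =>
    rw [derivative_X_pow, Nat.add_sub_cancel]
    simp only [eval_mul, eval_C, eval_pow, eval_X]
    ring

theorem exists_eval_mul_zpow_eq_sum {K : Type*} [DivisionRing K] (Q : K[X]) (s t : ℤ)
    (hQ : (Q.natDegree : ℤ) ≤ t - s) :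
    ∃ β : ℤ → K, (∀ ℓ : ℤ, (t < ℓ ∨ ℓ < s) → β ℓ = 0) ∧
      ∀ y : K, y ≠ 0 → Q.eval y * y ^ s = ∑ ℓ ∈ Finset.Icc s t, β ℓ * y ^ ℓ := by
  refine ⟨fun ℓ => if ℓ ∈ Finset.Icc s t then Q.coeff (ℓ - s).toNat else 0,
    fun ℓ hℓ => if_neg (by simp only [Finset.mem_Icc]; omega), fun y hy => ?_⟩
  rw [eval_eq_sum_range' (n := (t - s).toNat + 1) (by omega), Finset.sum_mul]
  refine Finset.sum_nbij' (fun j => j + s) (fun ℓ => (ℓ - s).toNat) ?_ ?_ ?_ ?_ ?_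
  · intro j hj; simp only [Finset.mem_range, Finset.mem_Icc] at hj ⊢; omega
  · intro ℓ hℓ; simp only [Finset.mem_range, Finset.mem_Icc] at hℓ ⊢; omega
  · intro j _; omega
  · intro ℓ hℓ; simp only [Finset.mem_Icc] at hℓ; omega
  · intro j hj
    simp only [Finset.mem_range] at hj
    dsimp only
    rw [if_pos (by simp only [Finset.mem_Icc]; omega), show ((j : ℤ) + s - s).toNat = j by omega,
      zpow_add₀ hy, zpow_natCast, mul_assoc]

end Polynomial

theorem Complex.exp_mul_I_sq_add_one (θ : ℂ) :
    exp (θ * I) ^ 2 + 1 = 2 * cos θ * exp (θ * I) := by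
  rw [two_cos, add_mul, neg_mul, exp_neg, inv_mul_cancel₀ (exp_ne_zero _)]
  ring

section

variable {K : Type*} [Field K]

-- `y^M` times the bracket in `g(y)`, with `t` in place of `2 cos (2πkμ/n)`.
noncomputable def gNumerator (a t : K) (M : ℕ) : K[X] :=
  X ^ (2 * M) + 1 - C t * X ^ M + C (M * a⁻¹) * (C a - X) * (X ^ (2 * M) - 1)

theorem eval_gNumerator (a t : K) (M : ℕ) {y : K} (hy : y ≠ 0) :
    (gNumerator a t M).eval y = y ^ M * ((y ^ (M : ℤ) + y ^ (-(M : ℤ)))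
      + (M : K) * a⁻¹ * (a - y) * (y ^ (M : ℤ) - y ^ (-(M : ℤ))) - t) := by
  have hyM : y ^ M ≠ 0 := pow_ne_zero _ hy
  simp only [gNumerator, eval_add, eval_sub, eval_mul, eval_pow, eval_C, eval_X, eval_one,
    zpow_neg, zpow_natCast]
  field_simp
  ring

theorem natDegree_gNumerator_le (a t : K) (M : ℕ) :
    (gNumerator a t M).natDegree ≤ 2 * M + 1 := by
  unfold gNumerator
  compute_degree
  all_goals omega

variable {a t : K} {M : ℕ}

theorem isRoot_gNumerator (h : (a ^ M) ^ 2 + 1 = t * a ^ M) : (gNumerator a t M).IsRoot a := by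
  simp only [gNumerator, IsRoot, eval_add, eval_sub, eval_mul, eval_pow, eval_C, eval_X,
    eval_one, sub_self, mul_zero, zero_mul, add_zero]
  rw [pow_mul']
  linear_combination h

theorem isRoot_derivative_gNumerator (ha : a ≠ 0) (h : (a ^ M) ^ 2 + 1 = t * a ^ M) :
    (derivative (gNumerator a t M)).IsRoot a := by
  rw [IsRoot, ← mul_eq_zero_iff_left ha]
  simp only [gNumerator, derivative_add, derivative_sub, derivative_mul, derivative_C,
    derivative_X, derivative_one, eval_add, eval_sub, eval_mul, eval_pow, eval_C, eval_X,
    eval_one, eval_zero]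
  have h2M := mul_eval_derivative_X_pow a (2 * M)
  have hM := mul_eval_derivative_X_pow a M
  push_cast at h2M
  rw [← pow_mul'] at h
  linear_combination
    h2M - t * hM - (M : K) * ((a ^ M) ^ 2 - 1) * mul_inv_cancel₀ ha + (M : K) * h

theorem sq_X_sub_C_dvd_gNumerator (ha : a ≠ 0) (h : (a ^ M) ^ 2 + 1 = t * a ^ M) :
    (X - C a) ^ 2 ∣ gNumerator a t M :=
  sq_X_sub_C_dvd_of_isRoot_derivative (isRoot_gNumerator h) (isRoot_derivative_gNumerator ha h)

theorem exists_gNumerator_eq_sq_mul (ha : a ≠ 0) (h : (a ^ M) ^ 2 + 1 = t * a ^ M) :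
    ∃ Q : K[X], gNumerator a t M = (X - C a) ^ 2 * Q ∧ Q.natDegree ≤ 2 * M - 1 := by
  obtain ⟨Q, hQ⟩ := sq_X_sub_C_dvd_gNumerator ha h
  refine ⟨Q, hQ, ?_⟩
  rcases eq_or_ne Q 0 with rfl | hQ0
  · simp
  · have hdeg := natDegree_gNumerator_le a t M
    rw [hQ, natDegree_mul (pow_ne_zero _ (X_sub_C_ne_zero a)) hQ0, natDegree_pow,
      natDegree_X_sub_C] at hdeg
    omega

end

theorem stmt_8_general (n : ℕ) (μ : ℤ) (hμ : 0 < μ)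
    (k : ℕ) (c : ℂ)
    (lam : ℂ) (hlam : lam = Complex.exp (2 * Real.pi * I / n))
    (g : ℂ → ℂ)
    (hg : ∀ y : ℂ, y ≠ 0 → g y =
      c * ((y ^ μ + y ^ (-μ))
        + (μ : ℂ) * lam ^ (-(k : ℤ)) * (lam ^ (k : ℤ) - y) * (y ^ μ - y ^ (-μ))
        - 2 * Complex.cos (2 * Real.pi * k * μ / n))) :
    ∃ β : ℤ → ℂ,
      (∀ ℓ : ℤ, (μ < ℓ ∨ ℓ < 1 - μ) → β ℓ = 0) ∧
      ∀ y : ℂ, y ≠ 0 → y ≠ lam ^ (k : ℤ) →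
        lam ^ (k : ℤ) * y * g y / (y - lam ^ (k : ℤ)) ^ 2 =
          ∑ ℓ ∈ Finset.Icc (1 - μ) μ, β ℓ * y ^ ℓ := by
  lift μ to ℕ using hμ.le with M
  simp only [Int.cast_natCast, zpow_neg lam] at hg
  set a := lam ^ (k : ℤ)
  set θ : ℂ := 2 * Real.pi * k * M / n
  have ha : a ≠ 0 := zpow_ne_zero _ (hlam ▸ exp_ne_zero _)
  have haM : a ^ M = exp (θ * I) := by
    rw [show a = lam ^ k from zpow_natCast lam k, ← pow_mul, hlam, ← exp_nat_mul]
    congr 1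
    push_cast [θ]
    ring
  obtain ⟨Q, hQ, hQdeg⟩ := exists_gNumerator_eq_sq_mul ha
    (haM ▸ exp_mul_I_sq_add_one θ : (a ^ M) ^ 2 + 1 = 2 * cos θ * a ^ M)
  obtain ⟨β, hβ0, hβ⟩ := exists_eval_mul_zpow_eq_sum (C (a * c) * Q) (1 - M) M
    (by have := natDegree_C_mul_le (a * c) Q; omega)
  refine ⟨β, hβ0, fun y hy hya => ?_⟩
  have hgy : y ^ M * g y = c * ((y - a) ^ 2 * Q.eval y) := by
    have hP := congrArg (eval y) hQ
    rw [eval_gNumerator a _ M hy, eval_mul, eval_pow, eval_sub, eval_X, eval_C] at hP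
    rw [hg y hy]
    linear_combination c * hP
  rw [← hβ y hy, eval_mul, eval_C, zpow_sub₀ hy, zpow_one, zpow_natCast]
  have hya' : y - a ≠ 0 := sub_ne_zero.mpr hya
  field_simp
  linear_combination hgy

/-- For μ a positive integer (n ∤ μ), λ = exp(2πi/n), 0 ≤ k < n and
g(y) = c[(y^μ + y^{-μ}) + μλ^{-k}(λ^k - y)(y^μ - y^{-μ}) - 2cos(2πkμ/n)],
the function G(y) = λ^k y g(y)/(y - λ^k)² is a Laurent polynomial in y with
highest degree ≤ μ and lowest degree ≥ 1 - μ. -/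
theorem stmt_8 (m n : ℕ) (hn : n = 2 * m + 1) (μ : ℤ) (hμ : 0 < μ)
    (hnμ : ¬ (n : ℤ) ∣ μ) (k : ℕ) (hk : k < n) (c : ℂ)
    (lam : ℂ) (hlam : lam = Complex.exp (2 * Real.pi * I / n))
    (g : ℂ → ℂ)
    (hg : ∀ y : ℂ, y ≠ 0 → g y =
      c * ((y ^ μ + y ^ (-μ))
        + (μ : ℂ) * lam ^ (-(k : ℤ)) * (lam ^ (k : ℤ) - y) * (y ^ μ - y ^ (-μ))
        - 2 * Complex.cos (2 * Real.pi * k * μ / n))) :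
    ∃ β : ℤ → ℂ,
      (∀ ℓ : ℤ, (μ < ℓ ∨ ℓ < 1 - μ) → β ℓ = 0) ∧
      ∀ y : ℂ, y ≠ 0 → y ≠ lam ^ (k : ℤ) →
        lam ^ (k : ℤ) * y * g y / (y - lam ^ (k : ℤ)) ^ 2 =
          ∑ ℓ ∈ Finset.Icc (1 - μ) μ, β ℓ * y ^ ℓ :=
  stmt_8_general n μ hμ k c lam hlam g hg
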